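/- arXiv:1902.08987 — 3 statements merged into one kernel-verified Lean document; each statement's English description precedes it below -/
import Mathlib

section
/- Let μ be a probability measure on a space X and let w : X → (0,∞) be measurable with ∫ w^{k/2}(ln w)² dμ > 0. Then for every real b ≠ 0 and every real α with α(k−α) ≤ k²/4 (i.e. α real), ∫ w^α dμ ≥ ∫ w^{k/2} dμ > ∫ w^{k/2} cos(b ln w) dμ, provided additionally that ∫ w^α dμ = ∫ w^{k−α} dμ (symmetry) and that ln w is not μ-a.e. constant with b·ln w a multiple of 2π. -/
open MeasureTheory Real

/-!
The first inequality is midpoint convexity of `s ↦ w ^ s = exp (s log w)`, integrated and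
combined with the symmetry `∫ w ^ α = ∫ w ^ (k - α)`. The second holds because
`w ^ (k / 2) (1 - cos (b log w))` is nonnegative and vanishes exactly where `b log w ∈ 2πℤ`,
which by assumption is not almost everywhere.
-/

lemma Real.rpow_midpoint_le {x : ℝ} (hx : 0 < x) (s t : ℝ) :
    x ^ ((s + t) / 2) ≤ (x ^ s + x ^ t) / 2 := by
  have h := convexOn_exp.2 (Set.mem_univ (log x * s)) (Set.mem_univ (log x * t))
    (by norm_num : (0 : ℝ) ≤ 1 / 2) (by norm_num : (0 : ℝ) ≤ 1 / 2) (by norm_num)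
  simp only [smul_eq_mul] at h
  have hmid : log x * ((s + t) / 2) = 1 / 2 * (log x * s) + 1 / 2 * (log x * t) := by ring
  rw [rpow_def_of_pos hx, rpow_def_of_pos hx, rpow_def_of_pos hx, hmid]
  linarith

lemma Real.cos_lt_one_iff_not_exists_int (θ : ℝ) :
    cos θ < 1 ↔ ¬ ∃ n : ℤ, θ = 2 * π * n := by
  rw [(cos_le_one θ).lt_iff_ne, Ne, cos_eq_one_iff]
  simp only [eq_comm (a := θ), mul_comm]

section

variable {X : Type*} [MeasurableSpace X] {μ : Measure X}

theorem integral_rpow_midpoint_le {w : X → ℝ} (hwpos : ∀ x, 0 < w x) {s t : ℝ}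
    (hs : Integrable (fun x => w x ^ s) μ) (ht : Integrable (fun x => w x ^ t) μ)
    (hst : Integrable (fun x => w x ^ ((s + t) / 2)) μ) :
    ∫ x, w x ^ ((s + t) / 2) ∂μ ≤ ((∫ x, w x ^ s ∂μ) + ∫ x, w x ^ t ∂μ) / 2 := by
  rw [← integral_add hs ht, ← integral_div]
  exact integral_mono hst ((hs.add ht).div_const 2) fun x => rpow_midpoint_le (hwpos x) s t

theorem integral_mul_cos_lt_integral {g θ : X → ℝ} (hgpos : ∀ x, 0 < g x) (hg : Integrable g μ)
    (hθ : AEStronglyMeasurable θ μ) (hθ_nc : ¬ ∀ᵐ x ∂μ, ∃ n : ℤ, θ x = 2 * π * n) :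
    ∫ x, g x * cos (θ x) ∂μ < ∫ x, g x ∂μ := by
  have hgcos : Integrable (fun x => g x * cos (θ x)) μ :=
    hg.mul_bdd (c := 1) (continuous_cos.comp_aestronglyMeasurable hθ)
      (Filter.Eventually.of_forall fun x => by simpa using abs_cos_le_one (θ x))
  have hgap : Integrable (fun x => g x * (1 - cos (θ x))) μ := by
    convert hg.sub hgcos using 1
    ext x
    simp only [Pi.sub_apply, mul_sub, mul_one]
  have hsupport :
      {x | ¬ ∃ n : ℤ, θ x = 2 * π * n} ⊆ Function.support fun x => g x * (1 - cos (θ x)) :=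
    fun x hx => (mul_pos (hgpos x)
      (sub_pos.2 ((cos_lt_one_iff_not_exists_int _).2 hx))).ne'
  have hpos : 0 < ∫ x, g x * (1 - cos (θ x)) ∂μ := by
    rw [integral_pos_iff_support_of_nonneg
      (fun x => mul_nonneg (hgpos x).le (sub_nonneg.2 (cos_le_one _))) hgap]
    exact (pos_iff_ne_zero.2 (by rwa [ae_iff] at hθ_nc)).trans_le (measure_mono hsupport)
  simp only [mul_sub, mul_one] at hpos
  rw [integral_sub hg hgcos] at hpos
  linarith

end

theorem weight_integral_inequality_chain_general {X : Type*} [MeasurableSpace X]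
    (μ : Measure X) (k : ℝ)
    (w : X → ℝ) (hw : Measurable w) (hwpos : ∀ x, 0 < w x)
    (b : ℝ) (α : ℝ)
    (hint1 : Integrable (fun x => w x ^ α) μ)
    (hint2 : Integrable (fun x => w x ^ (k - α)) μ)
    (hint3 : Integrable (fun x => w x ^ (k / 2)) μ)
    (hsym : ∫ x, w x ^ α ∂μ = ∫ x, w x ^ (k - α) ∂μ)
    (hnc : ¬ ∀ᵐ x ∂μ, ∃ n : ℤ, b * Real.log (w x) = 2 * π * n) :
    (∫ x, w x ^ (k / 2) ∂μ) ≤ ∫ x, w x ^ α ∂μ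
      ∧ (∫ x, w x ^ (k / 2) * Real.cos (b * Real.log (w x)) ∂μ)
          < ∫ x, w x ^ (k / 2) ∂μ := by
  have hmid : (α + (k - α)) / 2 = k / 2 := by ring
  constructor
  · have h := integral_rpow_midpoint_le hwpos hint1 hint2 (by rwa [hmid])
    rw [hmid, ← hsym] at h
    linarith
  · exact integral_mul_cos_lt_integral (fun x => rpow_pos_of_pos (hwpos x) _) hint3
      (hw.log.const_mul b).aestronglyMeasurable hnc

/-- Abstract version of the inequality chain: for a probability measure `μ` and
a positive weight `w`, with the symmetry `∫ w^α = ∫ w^{k−α}` and `b ln w` not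
a.e. a multiple of `2π`, one has
`∫ w^α dμ ≥ ∫ w^{k/2} dμ > ∫ w^{k/2} cos(b ln w) dμ`. -/
theorem weight_integral_inequality_chain {X : Type*} [MeasurableSpace X]
    (μ : Measure X) [IsProbabilityMeasure μ] (k : ℝ)
    (w : X → ℝ) (hw : Measurable w) (hwpos : ∀ x, 0 < w x)
    (hvar : 0 < ∫ x, w x ^ (k / 2) * Real.log (w x) ^ 2 ∂μ)
    (b : ℝ) (hb : b ≠ 0) (α : ℝ)
    (hint1 : Integrable (fun x => w x ^ α) μ)
    (hint2 : Integrable (fun x => w x ^ (k - α)) μ)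
    (hint3 : Integrable (fun x => w x ^ (k / 2)) μ)
    (hint4 : Integrable (fun x => w x ^ (k / 2) * Real.log (w x) ^ 2) μ)
    (hsym : ∫ x, w x ^ α ∂μ = ∫ x, w x ^ (k - α) ∂μ)
    (hnc : ¬ ∀ᵐ x ∂μ, ∃ n : ℤ, b * Real.log (w x) = 2 * π * n) :
    (∫ x, w x ^ (k / 2) ∂μ) ≤ ∫ x, w x ^ α ∂μ
      ∧ (∫ x, w x ^ (k / 2) * Real.cos (b * Real.log (w x)) ∂μ)
          < ∫ x, w x ^ (k / 2) ∂μ :=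
  weight_integral_inequality_chain_general μ k w hw hwpos b α hint1 hint2 hint3 hsym hnc
end

section
/- Let ρ > 0, 0 < η < ρ. For ψ ∈ [0, π/2], let ω(ψ) = l(ψ)/q(ψ) where l(ψ) = √(ρ² − η² sin²ψ) + η cos ψ and q(ψ) = √(ρ² − η² sin²ψ) − η cos ψ, and set τ(ψ) = ln ω(0) − ln ω(ψ). Then τ(ψ) = (η/ρ)ψ² + O(ψ⁴) as ψ → 0; in particular lim_{ψ→0⁺} √(τ(ψ))/sin ψ = √(η/ρ). -/
/-!
Since `l ψ * q ψ = ρ² - η²` does not depend on `ψ`, `τ ψ = -2 log (l ψ / (ρ + η))`. Starting from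
`1 - cos ψ = ψ²/2 + O(ψ⁴)`, each of `sin² ψ`, `√(ρ² - η² sin² ψ)` and `τ ψ` gets an expansion
`a + b ψ² + O(ψ⁴)` by composing it with a first-order expansion `g t = a + b t + O(t²)` of an outer
function (`2t - t²`, `√(ρ² + t)`, `-2 log (1 + t)`). The limit then follows from
`τ ψ / ψ² → η / ρ` and `sin ψ / ψ → 1`.
-/

open Real Filter Asymptotics Topology

namespace Real

lemma abs_sqrt_sq_add_sub_le {ρ t : ℝ} (hρ : 0 < ρ) (ht : -ρ ^ 2 ≤ t) :
    |√(ρ ^ 2 + t) - (ρ + (2 * ρ)⁻¹ * t)| ≤ (2 * ρ ^ 3)⁻¹ * t ^ 2 := by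
  set s := √(ρ ^ 2 + t)
  have hs : s ^ 2 = ρ ^ 2 + t := sq_sqrt (by linarith)
  have hs0 : 0 ≤ s := sqrt_nonneg _
  have h_eq : s - (ρ + (2 * ρ)⁻¹ * t) = -(2 * ρ)⁻¹ * (s - ρ) ^ 2 := by
    field_simp
    linear_combination hs
  have h_diff : |s - ρ| ≤ ρ⁻¹ * |t| := by
    rw [le_inv_mul_iff₀ hρ, ← abs_of_pos hρ, ← abs_mul, abs_of_pos hρ]
    calc |ρ * (s - ρ)| ≤ |(s + ρ) * (s - ρ)| := by
          rw [abs_mul, abs_mul]; gcongr; linarith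
      _ = |t| := by congr 1; linear_combination hs
  rw [h_eq, abs_mul, abs_neg, abs_inv, abs_of_pos (by positivity : 0 < 2 * ρ), abs_pow]
  calc (2 * ρ)⁻¹ * |s - ρ| ^ 2 ≤ (2 * ρ)⁻¹ * (ρ⁻¹ * |t|) ^ 2 := by gcongr
    _ = (2 * ρ ^ 3)⁻¹ * t ^ 2 := by rw [mul_pow, sq_abs]; field_simp

lemma isBigO_sqrt_sq_add_sub {ρ : ℝ} (hρ : 0 < ρ) :
    (fun t => √(ρ ^ 2 + t) - (ρ + (2 * ρ)⁻¹ * t)) =O[𝓝 0] (· ^ 2) := by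
  refine IsBigO.of_bound (2 * ρ ^ 3)⁻¹ ?_
  have : ∀ᶠ t in 𝓝 (0 : ℝ), -ρ ^ 2 < t := eventually_gt_nhds (by nlinarith)
  filter_upwards [this] with t ht
  simpa [sq_abs] using abs_sqrt_sq_add_sub_le hρ ht.le

lemma isBigO_log_one_add_sub_self :
    (fun t => log (1 + t) - t) =O[𝓝 0] (· ^ 2) := by
  refine IsBigO.of_bound 2 ?_
  have : ∀ᶠ t in 𝓝 (0 : ℝ), -2⁻¹ < t := eventually_gt_nhds (by norm_num)
  filter_upwards [this] with t ht
  have h1 : 0 < 1 + t := by linarith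
  have h_upper : log (1 + t) ≤ t := by linarith [log_le_sub_one_of_pos h1]
  have h_lower : 1 - (1 + t)⁻¹ ≤ log (1 + t) := one_sub_inv_le_log_of_pos h1
  have h_gap : t - (1 - (1 + t)⁻¹) = t ^ 2 / (1 + t) := by field_simp; ring
  have h_gap_le : t ^ 2 / (1 + t) ≤ 2 * t ^ 2 := by
    rw [div_le_iff₀ h1]; nlinarith [sq_nonneg t]
  rw [norm_pow, norm_eq_abs, norm_eq_abs, sq_abs, abs_of_nonpos (by linarith)]
  linarith

lemma isBigO_one_sub_cos_sub :
    (fun ψ => (1 - cos ψ) - 2⁻¹ * ψ ^ 2) =O[𝓝 0] fun ψ => (ψ ^ 2) ^ 2 := by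
  refine IsBigO.of_bound 1 ?_
  filter_upwards [Metric.ball_mem_nhds (0 : ℝ) one_pos] with ψ hψ
  rw [Metric.mem_ball, dist_zero_right, norm_eq_abs] at hψ
  have := cos_bound hψ.le
  rw [norm_eq_abs, norm_pow, norm_pow, norm_eq_abs, ← pow_mul]
  calc |1 - cos ψ - 2⁻¹ * ψ ^ 2| = |cos ψ - (1 - ψ ^ 2 / 2)| := by rw [← abs_neg]; ring_nf
    _ ≤ 1 * |ψ| ^ 4 := by linarith [pow_nonneg (abs_nonneg ψ) 4]

end Real

namespace Asymptotics

theorem IsBigO.comp_expansion {α : Type*} {l : Filter α} {g : ℝ → ℝ} {u φ : α → ℝ} {a b c : ℝ}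
    (hg : (fun t => g t - (a + b * t)) =O[𝓝 0] (· ^ 2)) (hφ : Tendsto φ l (𝓝 0))
    (hu : (fun x => u x - c * φ x) =O[l] fun x => φ x ^ 2) :
    (fun x => g (u x) - (a + b * c * φ x)) =O[l] fun x => φ x ^ 2 := by
  have hφ_sq : (fun x => φ x ^ 2) =O[l] φ := by
    simpa [sq] using (isBigO_refl φ l).mul (hφ.isBigO_one ℝ)
  have hu_φ : u =O[l] φ :=
    ((hu.trans hφ_sq).add ((isBigO_refl φ l).const_mul_left c)).congr_left fun x => by ring
  have hg_u := hg.comp_tendsto (hu_φ.trans_tendsto hφ)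
  exact ((hg_u.trans (hu_φ.pow 2)).add (hu.const_mul_left b)).congr_left fun x => by
    simp only [Function.comp_apply]; ring

end Asymptotics

lemma tendsto_sq_nhds_zero : Tendsto (fun ψ : ℝ => ψ ^ 2) (𝓝 0) (𝓝 0) := by
  simpa using (continuous_pow 2).tendsto (0 : ℝ)

lemma isBigO_sin_sq_sub :
    (fun ψ => sin ψ ^ 2 - ψ ^ 2) =O[𝓝 0] fun ψ => (ψ ^ 2) ^ 2 := by
  have h_quad : (fun t : ℝ => (2 * t - t ^ 2) - (0 + 2 * t)) =O[𝓝 0] (· ^ 2) :=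
    (isBigO_refl (· ^ 2) _).neg_left.congr_left fun t => by ring
  refine (h_quad.comp_expansion tendsto_sq_nhds_zero isBigO_one_sub_cos_sub).congr_left
    fun ψ => ?_
  rw [sin_sq]; ring

section Chord

variable {ρ η : ℝ}

lemma isBigO_sqrt_sub_sin_sq_sub (hρ : 0 < ρ) :
    (fun ψ => √(ρ ^ 2 - η ^ 2 * sin ψ ^ 2) - (ρ - η ^ 2 / (2 * ρ) * ψ ^ 2))
      =O[𝓝 0] fun ψ => (ψ ^ 2) ^ 2 := by
  have h_inner : (fun ψ => -η ^ 2 * sin ψ ^ 2 - -η ^ 2 * ψ ^ 2) =O[𝓝 0] fun ψ => (ψ ^ 2) ^ 2 :=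
    (isBigO_sin_sq_sub.const_mul_left (-η ^ 2)).congr_left fun ψ => by ring
  refine ((isBigO_sqrt_sq_add_sub hρ).comp_expansion tendsto_sq_nhds_zero h_inner).congr_left
    fun ψ => ?_
  rw [neg_mul, ← sub_eq_add_neg]; ring

lemma isBigO_neg_two_mul_log_chord_sub (hρ : 0 < ρ) (hρη : ρ + η ≠ 0) :
    (fun ψ => -2 * log ((√(ρ ^ 2 - η ^ 2 * sin ψ ^ 2) + η * cos ψ) / (ρ + η)) - η / ρ * ψ ^ 2)
      =O[𝓝 0] fun ψ => (ψ ^ 2) ^ 2 := by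
  have h_log : (fun t => -2 * log (1 + t) - (0 + -2 * t)) =O[𝓝 0] (· ^ 2) :=
    (isBigO_log_one_add_sub_self.const_mul_left (-2)).congr_left fun t => by ring
  have h_chord : (fun ψ => ((√(ρ ^ 2 - η ^ 2 * sin ψ ^ 2) + η * cos ψ) / (ρ + η) - 1)
      - -(η / (2 * ρ)) * ψ ^ 2) =O[𝓝 0] fun ψ => (ψ ^ 2) ^ 2 :=
    (((isBigO_sqrt_sub_sin_sq_sub (η := η) hρ).add
      (isBigO_one_sub_cos_sub.const_mul_left (-η))).const_mul_left (ρ + η)⁻¹).congr_left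
      fun ψ => by field_simp; ring
  refine (h_log.comp_expansion tendsto_sq_nhds_zero h_chord).congr_left fun ψ => ?_
  rw [add_sub_cancel]
  field_simp
  ring

lemma abs_mul_cos_lt_sqrt (h : η ^ 2 < ρ ^ 2) (ψ : ℝ) :
    |η * cos ψ| < √(ρ ^ 2 - η ^ 2 * sin ψ ^ 2) := by
  rw [lt_sqrt (abs_nonneg _), sq_abs, mul_pow, cos_sq']
  linarith

lemma sqrt_add_mul_cos_mul_sqrt_sub (h : η ^ 2 ≤ ρ ^ 2) (ψ : ℝ) :
    (√(ρ ^ 2 - η ^ 2 * sin ψ ^ 2) + η * cos ψ) * (√(ρ ^ 2 - η ^ 2 * sin ψ ^ 2) - η * cos ψ)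
      = ρ ^ 2 - η ^ 2 := by
  have h_nonneg : 0 ≤ ρ ^ 2 - η ^ 2 * sin ψ ^ 2 := by
    nlinarith [sin_sq_le_one ψ, sq_nonneg η]
  linear_combination sq_sqrt h_nonneg - η ^ 2 * sin_sq_add_cos_sq ψ

end Chord

lemma tendsto_sqrt_div_sin_of_isBigO {f : ℝ → ℝ} {c : ℝ}
    (hf : (fun ψ => f ψ - c * ψ ^ 2) =O[𝓝[>] 0] fun ψ => ψ ^ 4) :
    Tendsto (fun ψ => √(f ψ) / sin ψ) (𝓝[>] 0) (𝓝 √c) := by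
  have h_pos : ∀ᶠ ψ in 𝓝[>] (0 : ℝ), 0 < ψ := self_mem_nhdsWithin
  have h_ratio : Tendsto (fun ψ => f ψ / ψ ^ 2) (𝓝[>] 0) (𝓝 c) := by
    have h_rem : (fun ψ => f ψ / ψ ^ 2 - c) =O[𝓝[>] 0] fun ψ => ψ ^ 2 := by
      refine (hf.mul (isBigO_refl (fun ψ : ℝ => (ψ ^ 2)⁻¹) _)).congr' ?_ ?_ <;>
        filter_upwards [h_pos] with ψ hψ <;> field_simp
    exact tendsto_sub_nhds_zero_iff.mp
      (h_rem.trans_tendsto (tendsto_sq_nhds_zero.mono_left nhdsWithin_le_nhds))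
  have h_sinc : Tendsto sinc (𝓝[>] 0) (𝓝 1) := by
    simpa using (continuous_sinc.tendsto 0).mono_left nhdsWithin_le_nhds
  have h_lim := ((continuous_sqrt.tendsto c).comp h_ratio).div h_sinc one_ne_zero
  rw [div_one] at h_lim
  refine h_lim.congr' ?_
  filter_upwards [h_pos] with ψ hψ
  rw [Pi.div_apply, Function.comp_apply, sinc_of_ne_zero hψ.ne', sqrt_div' _ (sq_nonneg ψ),
    sqrt_sq hψ.le, div_div_div_cancel_right₀ hψ.ne']

lemma log_div_sub_log_div_of_mul_eq {l₀ q₀ l q : ℝ} (hl₀ : l₀ ≠ 0) (hq₀ : q₀ ≠ 0) (hl : l ≠ 0)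
    (hq : q ≠ 0) (h : l * q = l₀ * q₀) :
    log (l₀ / q₀) - log (l / q) = -2 * log (l / l₀) := by
  have h_log := congrArg log h
  rw [log_mul hl hq, log_mul hl₀ hq₀] at h_log
  rw [log_div hl₀ hq₀, log_div hl hq, log_div hl hl₀]
  linarith

/-- With `l(ψ) = √(ρ² − η² sin²ψ) + η cos ψ`, `q(ψ) = √(ρ² − η² sin²ψ) − η cos ψ`
and `τ(ψ) = ln(l(0)/q(0)) − ln(l(ψ)/q(ψ))`, one has `τ(ψ) = (η/ρ)ψ² + O(ψ⁴)` as
`ψ → 0⁺`; in particular `√(τ(ψ))/sin ψ → √(η/ρ)`. -/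
theorem tau_asymptotics (ρ η : ℝ) (hρ : 0 < ρ) (hη : 0 < η) (hηρ : η < ρ)
    (l q τ : ℝ → ℝ)
    (hl : ∀ ψ, l ψ = Real.sqrt (ρ ^ 2 - η ^ 2 * Real.sin ψ ^ 2) + η * Real.cos ψ)
    (hq : ∀ ψ, q ψ = Real.sqrt (ρ ^ 2 - η ^ 2 * Real.sin ψ ^ 2) - η * Real.cos ψ)
    (hτ : ∀ ψ, τ ψ = Real.log (l 0 / q 0) - Real.log (l ψ / q ψ)) :
    (fun ψ => τ ψ - (η / ρ) * ψ ^ 2) =O[nhdsWithin 0 (Set.Ioi 0)] (fun ψ => ψ ^ 4)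
      ∧ Tendsto (fun ψ => Real.sqrt (τ ψ) / Real.sin ψ)
          (nhdsWithin 0 (Set.Ioi 0)) (nhds (Real.sqrt (η / ρ))) := by
  have hηρ_sq : η ^ 2 < ρ ^ 2 := by nlinarith
  have hl_ne (ψ : ℝ) : l ψ ≠ 0 := by
    have := abs_mul_cos_lt_sqrt hηρ_sq ψ
    rw [hl]; linarith [neg_abs_le (η * cos ψ)]
  have hq_ne (ψ : ℝ) : q ψ ≠ 0 := by
    have := abs_mul_cos_lt_sqrt hηρ_sq ψ
    rw [hq]; linarith [le_abs_self (η * cos ψ)]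
  have h_prod (ψ : ℝ) : l ψ * q ψ = l 0 * q 0 := by
    simp only [hl, hq, sqrt_add_mul_cos_mul_sqrt_sub hηρ_sq.le]
  have hl₀ : l 0 = ρ + η := by simp [hl, hρ.le]
  have h_exp : (fun ψ => τ ψ - η / ρ * ψ ^ 2) =O[𝓝 0] fun ψ => ψ ^ 4 := by
    refine (isBigO_neg_two_mul_log_chord_sub (η := η) hρ (by positivity)).congr (fun ψ => ?_)
      fun ψ => by ring
    rw [hτ, log_div_sub_log_div_of_mul_eq (hl_ne 0) (hq_ne 0) (hl_ne ψ) (hq_ne ψ) (h_prod ψ),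
      hl₀, hl]
  have h_exp_right := h_exp.mono (nhdsWithin_le_nhds (s := Set.Ioi 0))
  exact ⟨h_exp_right, tendsto_sqrt_div_sin_of_isBigO h_exp_right⟩
end

section
/- With ρ > 0, 0 < η < ρ, τ(ψ) = ln((ρ+η)/(ρ−η)) − ln(l(ψ)/q(ψ)) where l, q are as in the chord construction, the function ψ ↦ √(τ(ψ))/sin ψ is monotone increasing on (0, π/2] and its maximum value on [0, π/2] equals √(ln((ρ+η)/(ρ−η))) = √(r/ρ) where r = ρ ln((ρ+η)/(ρ−η)), attained at ψ = π/2. -/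
/-!
With `s = √(ρ² − η² sin²ψ)` one has `l = s + η cos ψ`, `q = s − η cos ψ` and `l q = ρ² − η²`,
so `τ = 2 log ((ρ + η) / l)` and `τ' = 2 η sin ψ / s`. The derivative of `τ / sin² ψ` therefore
has the sign of `η sin² ψ − τ s cos ψ`. This is nonnegative for `cos ψ ≥ 0`: `log x ≤ x − 1`
gives `τ l ≤ 2 (ρ + η − l)`, and `(ρ + η − l) (ρ − η + l) = 2 η l (1 − cos ψ)` reduces the rest
to an inequality that is linear in `s`. Taking square roots, `√τ / sin ψ` increases on
`(0, π/2]`, and at `π/2`, where `l = q`, it equals `√(log ((ρ + η) / (ρ − η)))`.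
-/

open Real Set

noncomputable section

namespace ChordConstruction

variable (ρ η : ℝ)

/-- A chord of the circle of radius `ρ` through a point at distance `η` from the centre, at
angle `ψ` to the diameter through that point, is cut by the point into segments of lengths
`chordL` and `chordQ`; `halfChord` is half its length. -/
def halfChord (ψ : ℝ) : ℝ := √(ρ ^ 2 - η ^ 2 * sin ψ ^ 2)

def chordL (ψ : ℝ) : ℝ := halfChord ρ η ψ + η * cos ψ

def chordQ (ψ : ℝ) : ℝ := halfChord ρ η ψ - η * cos ψ

def chordTau (ψ : ℝ) : ℝ := log ((ρ + η) / (ρ - η)) - log (chordL ρ η ψ / chordQ ρ η ψ)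

variable {ρ η}

lemma radicand_pos (hη : 0 ≤ η) (hηρ : η < ρ) (ψ : ℝ) : 0 < ρ ^ 2 - η ^ 2 * sin ψ ^ 2 := by
  nlinarith [sin_sq_le_one ψ]

lemma sq_halfChord (hη : 0 ≤ η) (hηρ : η < ρ) (ψ : ℝ) :
    halfChord ρ η ψ ^ 2 = ρ ^ 2 - η ^ 2 * sin ψ ^ 2 :=
  sq_sqrt (radicand_pos hη hηρ ψ).le

lemma halfChord_pos (hη : 0 ≤ η) (hηρ : η < ρ) (ψ : ℝ) : 0 < halfChord ρ η ψ :=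
  sqrt_pos.2 (radicand_pos hη hηρ ψ)

lemma halfChord_le (hρ : 0 ≤ ρ) (ψ : ℝ) : halfChord ρ η ψ ≤ ρ :=
  sqrt_le_iff.2 ⟨hρ, by nlinarith [sq_nonneg (η * sin ψ)]⟩

lemma abs_mul_cos_lt_halfChord (hη : 0 ≤ η) (hηρ : η < ρ) (ψ : ℝ) :
    |η * cos ψ| < halfChord ρ η ψ := by
  refine abs_lt_of_sq_lt_sq ?_ (halfChord_pos hη hηρ ψ).le
  rw [sq_halfChord hη hηρ, mul_pow]
  nlinarith [sin_sq_add_cos_sq ψ]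

lemma chordL_pos (hη : 0 ≤ η) (hηρ : η < ρ) (ψ : ℝ) : 0 < chordL ρ η ψ := by
  have := abs_lt.1 (abs_mul_cos_lt_halfChord hη hηρ ψ)
  unfold chordL; linarith

lemma chordQ_pos (hη : 0 ≤ η) (hηρ : η < ρ) (ψ : ℝ) : 0 < chordQ ρ η ψ := by
  have := abs_lt.1 (abs_mul_cos_lt_halfChord hη hηρ ψ)
  unfold chordQ; linarith

lemma chordL_le (hη : 0 ≤ η) (hηρ : η < ρ) (ψ : ℝ) : chordL ρ η ψ ≤ ρ + η := by
  have := halfChord_le (hη.trans hηρ.le) (η := η) ψ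
  have := mul_le_of_le_one_right hη (cos_le_one ψ)
  unfold chordL; linarith

lemma chordL_mul_chordQ (hη : 0 ≤ η) (hηρ : η < ρ) (ψ : ℝ) :
    chordL ρ η ψ * chordQ ρ η ψ = (ρ + η) * (ρ - η) := by
  unfold chordL chordQ
  linear_combination sq_halfChord hη hηρ ψ - η ^ 2 * sin_sq_add_cos_sq ψ

lemma chordTau_eq (hη : 0 ≤ η) (hηρ : η < ρ) (ψ : ℝ) :
    chordTau ρ η ψ = 2 * log ((ρ + η) / chordL ρ η ψ) := by
  have hl := (chordL_pos hη hηρ ψ).ne'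
  have hq := (chordQ_pos hη hηρ ψ).ne'
  have hlq := chordL_mul_chordQ hη hηρ ψ
  have hρη : ρ - η ≠ 0 := (sub_pos.2 hηρ).ne'
  have hρη' : ρ + η ≠ 0 := by linarith
  calc chordTau ρ η ψ = log (((ρ + η) / chordL ρ η ψ) ^ 2) := by
        rw [chordTau, ← log_div (div_ne_zero hρη' hρη) (div_ne_zero hl hq)]
        congr 1
        field_simp
        exact hlq
    _ = 2 * log ((ρ + η) / chordL ρ η ψ) := by simp [log_pow]

lemma chordTau_nonneg (hη : 0 ≤ η) (hηρ : η < ρ) (ψ : ℝ) : 0 ≤ chordTau ρ η ψ := by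
  rw [chordTau_eq hη hηρ]
  have hl := chordL_pos hη hηρ ψ
  exact mul_nonneg zero_le_two (log_nonneg ((one_le_div hl).2 (chordL_le hη hηρ ψ)))

lemma chordTau_pi_div_two : chordTau ρ η (π / 2) = log ((ρ + η) / (ρ - η)) := by
  simp [chordTau, chordL, chordQ]

lemma chordTau_mul_chordL_le (hη : 0 ≤ η) (hηρ : η < ρ) (ψ : ℝ) :
    chordTau ρ η ψ * chordL ρ η ψ ≤ 2 * (ρ + η - chordL ρ η ψ) := by
  have hl := chordL_pos hη hηρ ψ
  have hlog := log_le_sub_one_of_pos (div_pos (by linarith) hl : 0 < (ρ + η) / chordL ρ η ψ)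
  rw [chordTau_eq hη hηρ]
  calc 2 * log ((ρ + η) / chordL ρ η ψ) * chordL ρ η ψ
      ≤ 2 * ((ρ + η) / chordL ρ η ψ - 1) * chordL ρ η ψ := by gcongr
    _ = 2 * (ρ + η - chordL ρ η ψ) := by field_simp

lemma two_mul_sub_chordL_mul_le (hη : 0 ≤ η) (hηρ : η < ρ) {ψ : ℝ} (hcos : 0 ≤ cos ψ) :
    2 * (ρ + η - chordL ρ η ψ) * (halfChord ρ η ψ * cos ψ) ≤ η * sin ψ ^ 2 * chordL ρ η ψ := by
  set s := halfChord ρ η ψ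
  set c := cos ψ
  set l := chordL ρ η ψ
  have hl : l = s + η * c := rfl
  have hs := halfChord_pos hη hηρ ψ
  have hsρ := halfChord_le (hη.trans hηρ.le) (η := η) ψ
  have hc1 : c ≤ 1 := cos_le_one ψ
  have hpyth := sin_sq_add_cos_sq ψ
  have hfactor : (ρ + η - l) * (ρ - η + l) = 2 * η * l * (1 - c) := by
    rw [hl]; linear_combination -sq_halfChord hη hηρ ψ + η ^ 2 * hpyth
  have hlin : 4 * s * c ≤ (1 + c) * (ρ - η + l) := by
    nlinarith [mul_nonneg hs.le (sq_nonneg (1 - c)),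
      mul_nonneg (mul_nonneg (by linarith : 0 ≤ 1 + c) (by linarith : 0 ≤ 1 - c))
        (by linarith : 0 ≤ ρ - η),
      mul_nonneg (mul_nonneg (by linarith : 0 ≤ 1 + c) hcos) (by linarith : 0 ≤ ρ - s)]
  have hpos : 0 < ρ - η + l := by linarith [chordL_pos hη hηρ ψ]
  refine le_of_mul_le_mul_right ?_ hpos
  calc 2 * (ρ + η - l) * (s * c) * (ρ - η + l) = 4 * s * c * (η * l * (1 - c)) := by
        linear_combination 2 * s * c * hfactor
    _ ≤ (1 + c) * (ρ - η + l) * (η * l * (1 - c)) := by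
        refine mul_le_mul_of_nonneg_right hlin (mul_nonneg (mul_nonneg hη ?_) ?_) <;>
          linarith [chordL_pos hη hηρ ψ]
    _ = η * sin ψ ^ 2 * l * (ρ - η + l) := by
        linear_combination -(η * l * (ρ - η + l)) * hpyth

lemma chordTau_mul_le (hη : 0 ≤ η) (hηρ : η < ρ) {ψ : ℝ} (hcos : 0 ≤ cos ψ) :
    chordTau ρ η ψ * (halfChord ρ η ψ * cos ψ) ≤ η * sin ψ ^ 2 := by
  have hl := chordL_pos hη hηρ ψ
  have hsc : 0 ≤ halfChord ρ η ψ * cos ψ := mul_nonneg (halfChord_pos hη hηρ ψ).le hcos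
  refine le_of_mul_le_mul_right ?_ hl
  calc chordTau ρ η ψ * (halfChord ρ η ψ * cos ψ) * chordL ρ η ψ
      = chordTau ρ η ψ * chordL ρ η ψ * (halfChord ρ η ψ * cos ψ) := by ring
    _ ≤ 2 * (ρ + η - chordL ρ η ψ) * (halfChord ρ η ψ * cos ψ) :=
        mul_le_mul_of_nonneg_right (chordTau_mul_chordL_le hη hηρ ψ) hsc
    _ ≤ η * sin ψ ^ 2 * chordL ρ η ψ := two_mul_sub_chordL_mul_le hη hηρ hcos

lemma hasDerivAt_halfChord (hη : 0 ≤ η) (hηρ : η < ρ) (x : ℝ) :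
    HasDerivAt (halfChord ρ η) (-(η ^ 2 * sin x * cos x) / halfChord ρ η x) x := by
  have h := ((((hasDerivAt_sin x).pow 2).const_mul (η ^ 2)).const_sub (ρ ^ 2)).sqrt
    (radicand_pos hη hηρ x).ne'
  refine h.congr_deriv ?_
  have hs := (halfChord_pos hη hηρ x).ne'
  unfold halfChord at hs ⊢
  simp only [Pi.pow_apply]
  field_simp
  ring

lemma hasDerivAt_chordL (hη : 0 ≤ η) (hηρ : η < ρ) (x : ℝ) :
    HasDerivAt (chordL ρ η) (-(η * sin x * chordL ρ η x) / halfChord ρ η x) x := by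
  refine ((hasDerivAt_halfChord hη hηρ x).add ((hasDerivAt_cos x).const_mul η)).congr_deriv ?_
  have hs := (halfChord_pos hη hηρ x).ne'
  unfold chordL
  field_simp
  ring

lemma hasDerivAt_chordTau (hη : 0 ≤ η) (hηρ : η < ρ) (x : ℝ) :
    HasDerivAt (chordTau ρ η) (2 * η * sin x / halfChord ρ η x) x := by
  have hρη : ρ + η ≠ 0 := by linarith
  have hτ : chordTau ρ η = fun ψ => 2 * (log (ρ + η) - log (chordL ρ η ψ)) := funext fun ψ => by
    rw [chordTau_eq hη hηρ, log_div hρη (chordL_pos hη hηρ ψ).ne']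
  rw [hτ]
  have hl := (chordL_pos hη hηρ x).ne'
  refine ((((hasDerivAt_chordL hη hηρ x).log hl).const_sub _).const_mul 2).congr_deriv ?_
  have hs := (halfChord_pos hη hηρ x).ne'
  field_simp

lemma hasDerivAt_chordTau_div_sin_sq (hη : 0 ≤ η) (hηρ : η < ρ) {x : ℝ} (hsin : sin x ≠ 0) :
    HasDerivAt (fun ψ => chordTau ρ η ψ / sin ψ ^ 2)
      (2 * sin x * (η * sin x ^ 2 - chordTau ρ η x * (halfChord ρ η x * cos x)) /
        (halfChord ρ η x * sin x ^ 4)) x := by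
  refine ((hasDerivAt_chordTau hη hηρ x).div ((hasDerivAt_sin x).pow 2)
    (pow_ne_zero 2 hsin)).congr_deriv ?_
  have hs := (halfChord_pos hη hηρ x).ne'
  simp only [Pi.pow_apply]
  field_simp
  ring

lemma monotoneOn_chordTau_div_sin_sq (hη : 0 ≤ η) (hηρ : η < ρ) :
    MonotoneOn (fun ψ => chordTau ρ η ψ / sin ψ ^ 2) (Ioc 0 (π / 2)) := by
  have hsin : ∀ x ∈ Ioc 0 (π / 2), 0 < sin x := fun x hx =>
    sin_pos_of_pos_of_lt_pi hx.1 (by linarith [hx.2, pi_pos])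
  have hderiv x (hx : x ∈ Ioc 0 (π / 2)) :=
    hasDerivAt_chordTau_div_sin_sq hη hηρ (hsin x hx).ne'
  refine monotoneOn_of_hasDerivWithinAt_nonneg (convex_Ioc 0 (π / 2))
    (fun x hx => (hderiv x hx).continuousAt.continuousWithinAt)
    (fun x hx => (hderiv x (interior_subset hx)).hasDerivWithinAt) fun x hx => ?_
  rw [interior_Ioc] at hx
  have hcos : 0 ≤ cos x := cos_nonneg_of_mem_Icc ⟨by linarith [hx.1, pi_pos], hx.2.le⟩
  have := hsin x (Ioo_subset_Ioc_self hx)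
  have := halfChord_pos hη hηρ x
  have := chordTau_mul_le hη hηρ hcos
  exact div_nonneg (mul_nonneg (by positivity) (by linarith)) (by positivity)

lemma monotoneOn_sqrt_chordTau_div_sin (hη : 0 ≤ η) (hηρ : η < ρ) :
    MonotoneOn (fun ψ => √(chordTau ρ η ψ) / sin ψ) (Ioc 0 (π / 2)) := by
  have hsqrt : ∀ ψ ∈ Ioc 0 (π / 2), √(chordTau ρ η ψ) / sin ψ = √(chordTau ρ η ψ / sin ψ ^ 2) :=
    fun ψ hψ => by
      rw [sqrt_div' _ (sq_nonneg _),
        sqrt_sq (sin_nonneg_of_nonneg_of_le_pi hψ.1.le (by linarith [hψ.2, pi_pos]))]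
  intro a ha b hb hab
  simp only [hsqrt a ha, hsqrt b hb]
  exact sqrt_le_sqrt (monotoneOn_chordTau_div_sin_sq hη hηρ ha hb hab)

end ChordConstruction

end

theorem sqrt_tau_over_sin_monotone_max_general (ρ η : ℝ) (hη : 0 < η)
    (hηρ : η < ρ) (l q τ h : ℝ → ℝ)
    (hl : ∀ ψ, l ψ = Real.sqrt (ρ ^ 2 - η ^ 2 * Real.sin ψ ^ 2) + η * Real.cos ψ)
    (hq : ∀ ψ, q ψ = Real.sqrt (ρ ^ 2 - η ^ 2 * Real.sin ψ ^ 2) - η * Real.cos ψ)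
    (hτ : ∀ ψ, τ ψ = Real.log ((ρ + η) / (ρ - η)) - Real.log (l ψ / q ψ))
    (hh : ∀ ψ, h ψ = Real.sqrt (τ ψ) / Real.sin ψ) :
    MonotoneOn h (Ioc 0 (π / 2))
      ∧ (∀ ψ ∈ Icc 0 (π / 2), h ψ ≤ Real.sqrt (Real.log ((ρ + η) / (ρ - η))))
      ∧ h (π / 2) = Real.sqrt (Real.log ((ρ + η) / (ρ - η))) := by
  open ChordConstruction in
  obtain rfl : l = chordL ρ η := funext hl
  obtain rfl : q = chordQ ρ η := funext hq
  obtain rfl : τ = chordTau ρ η := funext hτ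
  obtain rfl : h = fun ψ => √(chordTau ρ η ψ) / sin ψ := funext hh
  have hmono := monotoneOn_sqrt_chordTau_div_sin hη.le hηρ
  have hmax : √(chordTau ρ η (π / 2)) / sin (π / 2) = √(log ((ρ + η) / (ρ - η))) := by
    rw [chordTau_pi_div_two, sin_pi_div_two, div_one]
  refine ⟨hmono, fun ψ hψ => ?_, hmax⟩
  rcases hψ.1.eq_or_lt with rfl | hψ0
  · simp [sqrt_nonneg]
  · exact (hmono ⟨hψ0, hψ.2⟩ ⟨by positivity, le_rfl⟩ hψ.2).trans_eq hmax

/-- The function `ψ ↦ √(τ(ψ))/sin ψ` is monotone increasing on `(0, π/2]` and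
its maximum on `[0, π/2]` is `√(ln((ρ+η)/(ρ−η))) = √(r/ρ)`, attained at `π/2`. -/
theorem sqrt_tau_over_sin_monotone_max (ρ η : ℝ) (hρ : 0 < ρ) (hη : 0 < η)
    (hηρ : η < ρ) (l q τ h : ℝ → ℝ)
    (hl : ∀ ψ, l ψ = Real.sqrt (ρ ^ 2 - η ^ 2 * Real.sin ψ ^ 2) + η * Real.cos ψ)
    (hq : ∀ ψ, q ψ = Real.sqrt (ρ ^ 2 - η ^ 2 * Real.sin ψ ^ 2) - η * Real.cos ψ)
    (hτ : ∀ ψ, τ ψ = Real.log ((ρ + η) / (ρ - η)) - Real.log (l ψ / q ψ))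
    (hh : ∀ ψ, h ψ = Real.sqrt (τ ψ) / Real.sin ψ) :
    MonotoneOn h (Ioc 0 (π / 2))
      ∧ (∀ ψ ∈ Icc 0 (π / 2), h ψ ≤ Real.sqrt (Real.log ((ρ + η) / (ρ - η))))
      ∧ h (π / 2) = Real.sqrt (Real.log ((ρ + η) / (ρ - η))) :=
  sqrt_tau_over_sin_monotone_max_general ρ η hη hηρ l q τ h hl hq hτ hh
end
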